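/- arXiv:1604.00803 — 3 statements merged into one kernel-verified Lean document; each statement's English description precedes it below -/
import Mathlib

section
/- Let a ≥ 2 and let ℓ be the least common multiple of 1, 2, …, a+1. Define E_a(x) = (1 − x)²·(1 − x^a)²·(1 − x^{a+1})·Π_{i=2}^{a−1} (1 − x^i)³ in ℤ[x]. Then E_a divides (1 − x^ℓ)^{3a−1} in ℤ[x], the quotient Q_a(x) = (1 − x^ℓ)^{3a−1}/E_a(x) has degree ℓ(3a−1) − (3/2)(a² + a), and Q_a is a product of cyclotomic polynomials, i.e. there is a finite multiset S of positive integers such that Q_a(x) = Π_{d ∈ S} Φ_d(x), where Φ_d denotes the d-th cyclotomic polynomial. -/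
/-!
For `i ∣ ℓ` we have `1 - X^ℓ = (1 - X^i) · ∏_{d ∣ ℓ, d ∤ i} Φ_d`. Hence a product of `n`
factors `1 - X^i` with every `i ∣ ℓ` divides `(1 - X^ℓ)^n`, with a product of cyclotomic
polynomials as cofactor. `E_a` is such a product with `3a - 1` factors whose indices lie in
`[1, a + 1]`, and its degree is `2 + 2a + (a + 1) + 3(2 + ⋯ + (a - 1)) = (3/2)(a² + a)`.
-/

open Polynomial

section CommRing

variable {R : Type*} [CommRing R]

theorem one_sub_X_pow_mul_prod_cyclotomic_sdiff {ℓ i : ℕ} (hℓ : 0 < ℓ) (hiℓ : i ∣ ℓ) :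
    (1 - X ^ i : R[X]) * ∏ d ∈ ℓ.divisors \ i.divisors, cyclotomic d R = 1 - X ^ ℓ := by
  have h := Finset.prod_sdiff (f := fun d => cyclotomic d R)
    (Nat.divisors_subset_of_dvd hℓ.ne' hiℓ)
  rw [prod_cyclotomic_eq_X_pow_sub_one hℓ,
    prod_cyclotomic_eq_X_pow_sub_one (Nat.pos_of_dvd_of_pos hiℓ hℓ)] at h
  linear_combination -h

theorem exists_prod_one_sub_X_pow_mul_prod_cyclotomic {ℓ : ℕ} (hℓ : 0 < ℓ) {M : Multiset ℕ}
    (hM : ∀ i ∈ M, i ∣ ℓ) :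
    ∃ S : Multiset ℕ, (∀ d ∈ S, 0 < d) ∧
      (M.map fun i => (1 - X ^ i : R[X])).prod * (S.map fun d => cyclotomic d R).prod =
        (1 - X ^ ℓ) ^ Multiset.card M := by
  induction M using Multiset.induction_on with
  | empty => exact ⟨0, by simp, by simp⟩
  | cons i M ih =>
    obtain ⟨S, hS_pos, hS⟩ := ih fun j hj => hM j (Multiset.mem_cons_of_mem hj)
    refine ⟨(ℓ.divisors \ i.divisors).val + S, fun d hd => ?_, ?_⟩
    · rcases Multiset.mem_add.1 hd with hd | hd
      · have hd : d ∈ ℓ.divisors \ i.divisors := hd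
        exact Nat.pos_of_mem_divisors (Finset.mem_sdiff.1 hd).1
      · exact hS_pos d hd
    · rw [Multiset.map_cons, Multiset.prod_cons, Multiset.map_add, Multiset.prod_add,
        Finset.prod_map_val, Multiset.card_cons, pow_succ, ← hS,
        ← one_sub_X_pow_mul_prod_cyclotomic_sdiff hℓ (hM i (Multiset.mem_cons_self i M))]
      ring

variable [Nontrivial R]

theorem natDegree_one_sub_X_pow {i : ℕ} (hi : 0 < i) : (1 - X ^ i : R[X]).natDegree = i := by
  rw [natDegree_sub_eq_right_of_natDegree_lt] <;> simp [hi]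

theorem one_sub_X_pow_ne_zero {i : ℕ} (hi : 0 < i) : (1 - X ^ i : R[X]) ≠ 0 := fun h =>
  hi.ne (by rw [← natDegree_one_sub_X_pow (R := R) hi, h, natDegree_zero])

variable [NoZeroDivisors R]

theorem natDegree_prod_one_sub_X_pow {M : Multiset ℕ} (hM : ∀ i ∈ M, 0 < i) :
    (M.map fun i => (1 - X ^ i : R[X])).prod.natDegree = M.sum := by
  rw [natDegree_multiset_prod, Multiset.map_map]
  · conv_rhs => rw [← Multiset.map_id M]
    exact congrArg _ (Multiset.map_congr rfl fun i hi => natDegree_one_sub_X_pow (hM i hi))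
  · rw [Multiset.mem_map]
    rintro ⟨i, hi, h0⟩
    exact one_sub_X_pow_ne_zero (hM i hi) h0

theorem exists_cyclotomic_cofactor_of_dvd {ℓ : ℕ} (hℓ : 0 < ℓ) {M : Multiset ℕ}
    (hM : ∀ i ∈ M, i ∣ ℓ) :
    ∃ Q : R[X],
      (1 - X ^ ℓ) ^ Multiset.card M = (M.map fun i => (1 - X ^ i : R[X])).prod * Q ∧
      Q.natDegree = ℓ * Multiset.card M - M.sum ∧
      ∃ S : Multiset ℕ, (∀ d ∈ S, 0 < d) ∧ Q = (S.map fun d => cyclotomic d R).prod := by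
  obtain ⟨S, hS_pos, hS⟩ := exists_prod_one_sub_X_pow_mul_prod_cyclotomic (R := R) hℓ hM
  refine ⟨_, hS.symm, ?_, S, hS_pos, rfl⟩
  have hQ : (S.map fun d => cyclotomic d R).prod ≠ 0 :=
    (monic_multiset_prod_of_monic _ _ fun d _ => cyclotomic.monic d R).ne_zero
  have hE : (M.map fun i => (1 - X ^ i : R[X])).prod ≠ 0 :=
    left_ne_zero_of_mul (hS ▸ pow_ne_zero _ (one_sub_X_pow_ne_zero hℓ))
  have hdeg := congrArg natDegree hS
  rw [natDegree_mul hE hQ, natDegree_pow, natDegree_one_sub_X_pow hℓ,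
    natDegree_prod_one_sub_X_pow fun i hi => Nat.pos_of_dvd_of_pos (hM i hi) hℓ] at hdeg
  rw [mul_comm]
  omega

end CommRing

theorem sum_Icc_two_id_mul_two {a : ℕ} (ha : 2 ≤ a) :
    (∑ i ∈ Finset.Icc 2 (a - 1), i) * 2 + 2 = a * (a - 1) := by
  rw [← Finset.sum_range_id_mul_two, Finset.range_eq_Ico,
    ← Finset.sum_Ico_consecutive _ (Nat.zero_le 2) ha,
    Finset.Icc_sub_one_right_eq_Ico_of_not_isMin (by simp [isMin_iff_eq_bot]; omega)]
  simp [Finset.sum_range_succ]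
  ring

/-- `Q_a = (1 − x^ℓ)^{3a−1} / E_a` exists in `ℤ[x]`, has degree `ℓ(3a−1) − (3/2)(a²+a)`,
and is a product of cyclotomic polynomials, where `ℓ = lcm(1, …, a+1)` and
`E_a = (1 − x)²(1 − x^a)²(1 − x^{a+1})·Π_{i=2}^{a−1}(1 − x^i)³`. -/
theorem Ggen_denominator_quotient_cyclotomic (a : ℕ) (ha : 2 ≤ a)
    (ℓ : ℕ) (hℓ : ℓ = (Finset.Icc 1 (a + 1)).lcm id)
    (E : Polynomial ℤ)
    (hE : E = (1 - Polynomial.X) ^ 2 * (1 - Polynomial.X ^ a) ^ 2 *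
      (1 - Polynomial.X ^ (a + 1)) *
      ∏ i ∈ Finset.Icc 2 (a - 1), (1 - Polynomial.X ^ i) ^ 3) :
    ∃ Q : Polynomial ℤ,
      (1 - Polynomial.X ^ ℓ) ^ (3 * a - 1) = E * Q ∧
      Q.natDegree = ℓ * (3 * a - 1) - 3 * (a ^ 2 + a) / 2 ∧
      ∃ S : Multiset ℕ, (∀ d ∈ S, 0 < d) ∧
        Q = (S.map fun d => Polynomial.cyclotomic d ℤ).prod := by
  set M : Multiset ℕ := 2 • {1} + 2 • {a} + {a + 1} + 3 • (Finset.Icc 2 (a - 1)).val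
  have hEM : E = (M.map fun i => (1 - X ^ i : ℤ[X])).prod := by
    simp [hE, M, Multiset.map_nsmul, Multiset.prod_nsmul, Finset.prod_pow]
  have hℓ_pos : 0 < ℓ := by
    rw [hℓ, Nat.pos_iff_ne_zero, Ne, Finset.lcm_eq_zero_iff]
    simp
  have hM : ∀ i ∈ M, i ∣ ℓ := by
    intro i hi
    rw [hℓ]
    refine Finset.dvd_lcm (Finset.mem_Icc.2 ?_)
    simp [M] at hi
    omega
  have hcard : Multiset.card M = 3 * a - 1 := by
    simp [M]
    omega
  have hsum : M.sum = 3 * (a ^ 2 + a) / 2 := by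
    have hgauss := sum_Icc_two_id_mul_two ha
    obtain ⟨b, rfl⟩ : ∃ b, a = b + 1 := ⟨a - 1, by omega⟩
    simp only [M, Multiset.sum_add, Multiset.sum_nsmul, Multiset.sum_singleton, Finset.sum_val,
      Nat.add_sub_cancel, Function.id_def, smul_eq_mul] at hgauss ⊢
    symm
    apply Nat.div_eq_of_eq_mul_left two_pos
    linarith
  rw [hEM, ← hcard, ← hsum]
  exact exists_cyclotomic_cofactor_of_dvd hℓ_pos hM
end

section
/- Let a ≥ 1 and k ≥ 1. The total number of Kronecker tableaux of shape (3k, k^a)/α and type (3k, k^a)/α, summed over all partitions α of k with at most a+1 parts, equals the number of coloured partitions of k with parts in B_a. -/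
/-- Number of coloured partitions of `k` with parts in
`B_a = {1̄, 2, 2̄, …, a, ā, a+1}`: the barred colours have weights `1, …, a`
(indexed by `Fin a`, index `i` having weight `i+1`) and the unbarred colours have
weights `2, …, a+1` (indexed by `Fin a`, index `i` having weight `i+2`). -/
noncomputable def colouredB (a k : ℕ) : ℕ :=
  Nat.card {p : (Fin a → ℕ) × (Fin a → ℕ) //
    (∑ i : Fin a, ((i : ℕ) + 1) * p.1 i) + (∑ i : Fin a, ((i : ℕ) + 2) * p.2 i) = k}

/-- The cells of the skew shape `λ/α`, with rows and columns indexed from `0`: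
cell `(i, j)` belongs to `λ/α` iff `α i ≤ j < λ i`. -/
def skewCells (lam alpha : ℕ → ℕ) : Set (ℕ × ℕ) :=
  {p | alpha p.1 ≤ p.2 ∧ p.2 < lam p.1}

/-- The number of cells of `S` in which the filling `T` has entry `v`. -/
noncomputable def entryCount (T : ℕ × ℕ → ℕ) (S : Set (ℕ × ℕ)) (v : ℕ) : ℕ :=
  Nat.card {p : ℕ × ℕ // p ∈ S ∧ T p = v}

/-- The set of cells giving an initial segment of the reverse reading word of a
filling of `λ/α` (rows read right to left, from the top row downwards): all cells in
rows `< r`, together with the cells in row `r` lying in columns `≥ c`. -/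
def rrwPrefix (lam alpha : ℕ → ℕ) (r c : ℕ) : Set (ℕ × ℕ) :=
  {p | p ∈ skewCells lam alpha ∧ (p.1 < r ∨ (p.1 = r ∧ c ≤ p.2))}

/-- `T` is a Kronecker tableau of shape `λ/α` and type `ν/α` (all partitions indexed
from `0`, so `lam 0` is the first part, etc.; `T` is required to vanish outside the
skew shape):
* `α ⊆ λ ∩ ν`;
* `T` is a semistandard filling: positive entries, weakly increasing along rows,
  strictly increasing down columns;
* the entry `v+1` occurs exactly `ν_{v+1} − α_{v+1}` times (type condition);
* every initial segment of the reverse reading word is an `α`-lattice permutation;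
* the `α`-condition: `α₁ = α₂`, or `α₁ > α₂` and (the number of `1`'s in the second
  row equals `α₁ − α₂`, or the number of `2`'s in the first row equals `α₁ − α₂`). -/
def IsKroneckerTableau (lam nu alpha : ℕ → ℕ) (T : ℕ × ℕ → ℕ) : Prop :=
  (∀ i, alpha i ≤ lam i ∧ alpha i ≤ nu i) ∧
  (∀ p, p ∉ skewCells lam alpha → T p = 0) ∧
  (∀ p ∈ skewCells lam alpha, 1 ≤ T p) ∧
  (∀ i j j', (i, j) ∈ skewCells lam alpha → (i, j') ∈ skewCells lam alpha → j ≤ j' →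
    T (i, j) ≤ T (i, j')) ∧
  (∀ i i' j, (i, j) ∈ skewCells lam alpha → (i', j) ∈ skewCells lam alpha → i < i' →
    T (i, j) < T (i', j)) ∧
  (∀ v : ℕ, entryCount T (skewCells lam alpha) (v + 1) = nu v - alpha v) ∧
  (∀ r c v : ℕ,
    entryCount T (rrwPrefix lam alpha r c) (v + 2) + alpha (v + 1) ≤
      entryCount T (rrwPrefix lam alpha r c) (v + 1) + alpha v) ∧
  (alpha 0 = alpha 1 ∨
    (alpha 1 < alpha 0 ∧
      (entryCount T {p | p ∈ skewCells lam alpha ∧ p.1 = 1} 1 = alpha 0 - alpha 1 ∨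
        entryCount T {p | p ∈ skewCells lam alpha ∧ p.1 = 0} 2 = alpha 0 - alpha 1)))

/-- The partition `(c, k, k, …, k)` with `a` copies of `k`, as a function `ℕ → ℕ`
indexed from `0`. -/
def hookRect (c k a : ℕ) : ℕ → ℕ :=
  fun i => if i = 0 then c else if i < a + 1 then k else 0

/-!
Let `T` be a Kronecker tableau of shape and type `(3k, k^a)/α`, and let `m r` be the number of
`1`s in row `r ≥ 1`. Reading the lattice condition backwards from the end of the reading word
shows that row `r ≥ 1` consists of its `m r` ones followed by `r + 1`s. The type condition then
forces the first row to hold `m r` copies of `r + 1` for each `r`, after its ones, so `T` is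
determined by `(α, m)`. Column strictness gives `m r ≤ α (r - 1) - α r`, and the Kronecker
condition on `α` is exactly `m 1 = α 0 - α 1`; conversely every such pair comes from a tableau.
Finally `(α, m)` corresponds to the coloured partition with `m (i + 1)` barred parts of weight
`i + 1` and `α (i + 1) - α (i + 2) - m (i + 2)` unbarred parts of weight `i + 2`, whose total
weight is `Σ (j + 1) (α j - α (j + 1)) = |α| = k`.
-/

namespace HookKronecker

open Finset

theorem sum_range_sum_Ico (n : ℕ) (f : ℕ → ℕ) :
    ∑ i ∈ range n, ∑ j ∈ Ico i n, f j = ∑ j ∈ range n, (j + 1) * f j := by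
  induction n with
  | zero => simp
  | succ n ih =>
    have hstep : ∀ i ∈ range n, ∑ j ∈ Ico i (n + 1), f j = ∑ j ∈ Ico i n, f j + f n :=
      fun i hi => sum_Ico_succ_top (mem_range.mp hi).le f
    rw [sum_range_succ, sum_range_succ, sum_congr rfl hstep, sum_add_distrib, ih, sum_const,
      card_range, smul_eq_mul, Nat.Ico_succ_singleton, sum_singleton]
    ring

theorem sum_Ico_tsub_succ_of_antitone {f : ℕ → ℕ} (hf : Antitone f) {j n : ℕ} (hjn : j ≤ n) :
    ∑ i ∈ Ico j n, (f i - f (i + 1)) = f j - f n := by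
  induction n, hjn using Nat.le_induction with
  | base => simp
  | succ n hjn ih =>
    rw [sum_Ico_succ_top hjn, ih]
    have := hf hjn
    have := hf (show n ≤ n + 1 by omega)
    omega

theorem filter_Ico_eq_Ico_card (P : ℕ → Prop) [DecidablePred P] (lo hi : ℕ)
    (hP : ∀ j j', lo ≤ j' → j' ≤ j → j < hi → P j → P j') :
    (Ico lo hi).filter P = Ico lo (lo + ((Ico lo hi).filter P).card) := by
  induction hi with
  | zero => simp
  | succ n ih =>
    rcases lt_or_ge n lo with hn | hlo
    · simp [Ico_eq_empty_of_le (show n + 1 ≤ lo by omega)]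
    by_cases hPn : P n
    · have hall : (Ico lo (n + 1)).filter P = Ico lo (n + 1) :=
        filter_true_of_mem fun j hj => hP n j (mem_Ico.mp hj).1 (by grind) (by omega) hPn
      rw [hall, Nat.card_Ico]
      congr 1
      omega
    · have hsame : (Ico lo (n + 1)).filter P = (Ico lo n).filter P := by
        rw [Nat.Ico_succ_right_eq_insert_Ico hlo, filter_insert, if_neg hPn]
      rw [hsame]
      exact ih fun j j' h1 h2 h3 => hP j j' h1 h2 (by omega)

theorem setOf_row_Ico_eq (r A B : ℕ) :
    {p : ℕ × ℕ | p.1 = r ∧ A ≤ p.2 ∧ p.2 < B} = {r} ×ˢ Set.Ico A B := by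
  ext ⟨i, j⟩
  simp

theorem ncard_row_Ico (r A B : ℕ) :
    ({p : ℕ × ℕ | p.1 = r ∧ A ≤ p.2 ∧ p.2 < B}).ncard = B - A := by
  rw [setOf_row_Ico_eq, Set.ncard_prod, Set.ncard_singleton, Set.ncard_Ico_nat, one_mul]

theorem finite_row_Ico (r A B : ℕ) : {p : ℕ × ℕ | p.1 = r ∧ A ≤ p.2 ∧ p.2 < B}.Finite := by
  rw [setOf_row_Ico_eq]
  exact (Set.finite_singleton r).prod (Set.finite_Ico A B)

theorem ncard_rows_Ico (n : ℕ) (F G : ℕ → ℕ) :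
    ({p : ℕ × ℕ | p.1 < n ∧ F p.1 ≤ p.2 ∧ p.2 < G p.1}).ncard = ∑ ρ ∈ range n, (G ρ - F ρ) := by
  have : {p : ℕ × ℕ | p.1 < n ∧ F p.1 ≤ p.2 ∧ p.2 < G p.1} =
      (((range n).sigma fun ρ => Ico (F ρ) (G ρ)).map (Equiv.sigmaEquivProd ℕ ℕ).toEmbedding :
        Set (ℕ × ℕ)) := by
    ext ⟨i, j⟩
    simp
  rw [this, Set.ncard_coe_finset, card_map, card_sigma]
  simp

def rowPrefixCount (r c ρ lo hi : ℕ) : ℕ :=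
  if ρ < r then hi - lo else if ρ = r then hi - max lo c else 0

theorem ncard_row_Ico_inter_prefix (ρ lo hi r c : ℕ) :
    ({p : ℕ × ℕ | (p.1 = ρ ∧ lo ≤ p.2 ∧ p.2 < hi) ∧ (p.1 < r ∨ p.1 = r ∧ c ≤ p.2)}).ncard =
      rowPrefixCount r c ρ lo hi := by
  unfold rowPrefixCount
  split_ifs with h1 h2
  · rw [← ncard_row_Ico ρ lo hi]
    congr 1
    ext ⟨i, j⟩
    simp only [Set.mem_ofPred_eq]
    grind
  · rw [← ncard_row_Ico ρ (max lo c) hi]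
    congr 1
    ext ⟨i, j⟩
    simp only [Set.mem_ofPred_eq]
    grind
  · convert Set.ncard_empty (ℕ × ℕ)
    ext ⟨i, j⟩
    simp only [Set.mem_ofPred_eq, Set.mem_empty_iff_false, iff_false]
    grind

section EntryCount

variable (T : ℕ × ℕ → ℕ) {S S' : Set (ℕ × ℕ)} (v : ℕ)

theorem entryCount_eq_ncard (S : Set (ℕ × ℕ)) :
    entryCount T S v = {p | p ∈ S ∧ T p = v}.ncard :=
  Nat.card_coe_set_eq _

theorem entryCount_union (hd : Disjoint S S') (hS : S.Finite) (hS' : S'.Finite) :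
    entryCount T (S ∪ S') v = entryCount T S v + entryCount T S' v := by
  simp only [entryCount_eq_ncard]
  rw [← Set.ncard_union_eq (hd.mono (fun _ h => h.1) (fun _ h => h.1))
    (hS.subset fun _ h => h.1) (hS'.subset fun _ h => h.1)]
  congr 1
  ext p
  simp only [Set.mem_union, Set.mem_ofPred_eq]
  tauto

theorem entryCount_congr (h : ∀ p, T p = v → (p ∈ S ↔ p ∈ S')) :
    entryCount T S v = entryCount T S' v := by
  simp only [entryCount_eq_ncard]
  congr 1
  ext p
  exact ⟨fun hp => ⟨(h p hp.2).1 hp.1, hp.2⟩, fun hp => ⟨(h p hp.2).2 hp.1, hp.2⟩⟩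

theorem entryCount_add_diff (h : S' ⊆ S) (hS : S.Finite) :
    entryCount T S' v + entryCount T (S \ S') v = entryCount T S v := by
  rw [← entryCount_union _ _ Set.disjoint_sdiff_right (hS.subset h) hS.sdiff,
    Set.union_sdiff_cancel h]

theorem entryCount_eq_zero_iff (hS : S.Finite) : entryCount T S v = 0 ↔ ∀ p ∈ S, T p ≠ v := by
  rw [entryCount_eq_ncard, Set.ncard_eq_zero (hS.subset fun _ h => h.1)]
  simp [Set.eq_empty_iff_forall_notMem]

theorem entryCount_row {r lo hi : ℕ} (hS : ∀ j, (r, j) ∈ S ↔ lo ≤ j ∧ j < hi) :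
    entryCount T {p | p ∈ S ∧ p.1 = r} v = #{j ∈ Ico lo hi | T (r, j) = v} := by
  have : {p | p ∈ {p | p ∈ S ∧ p.1 = r} ∧ T p = v} =
      (fun j => (r, j)) '' ↑{j ∈ Ico lo hi | T (r, j) = v} := by
    ext ⟨i, j⟩
    simp only [Set.mem_ofPred_eq, coe_filter, mem_Ico, Set.mem_image, Prod.mk.injEq]
    constructor
    · rintro ⟨⟨hp, rfl⟩, hv⟩
      exact ⟨j, ⟨(hS j).1 hp, hv⟩, rfl, rfl⟩
    · rintro ⟨j, ⟨hj, hv⟩, rfl, rfl⟩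
      exact ⟨⟨(hS j).2 hj, rfl⟩, hv⟩
  rw [entryCount_eq_ncard, this, Set.ncard_image_of_injective _ (Prod.mk_right_injective r),
    Set.ncard_coe_finset]

end EntryCount

theorem hookRect_zero (c k a : ℕ) : hookRect c k a 0 = c := rfl

theorem hookRect_of_le {c k a i : ℕ} (h1 : 1 ≤ i) (h2 : i ≤ a) : hookRect c k a i = k := by
  simp only [hookRect]
  rw [if_neg (by omega), if_pos (by omega)]

theorem mem_skewCells_hookRect {c k a : ℕ} {α : ℕ → ℕ} {i j : ℕ} :
    (i, j) ∈ skewCells (hookRect c k a) α ↔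
      (i = 0 ∧ α 0 ≤ j ∧ j < c) ∨ (1 ≤ i ∧ i ≤ a ∧ α i ≤ j ∧ j < k) := by
  simp only [skewCells, hookRect, Set.mem_ofPred_eq]
  split_ifs <;> grind

theorem mem_skewCells_hookRect_zero {c k a : ℕ} {α : ℕ → ℕ} {j : ℕ} :
    (0, j) ∈ skewCells (hookRect c k a) α ↔ α 0 ≤ j ∧ j < c := by
  simp [mem_skewCells_hookRect]

theorem mem_skewCells_hookRect_of_le {c k a : ℕ} {α : ℕ → ℕ} {r j : ℕ} (h1 : 1 ≤ r)
    (h2 : r ≤ a) : (r, j) ∈ skewCells (hookRect c k a) α ↔ α r ≤ j ∧ j < k := by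
  simp only [mem_skewCells_hookRect]
  omega

theorem finite_skewCells_hookRect (c k a : ℕ) (α : ℕ → ℕ) :
    (skewCells (hookRect c k a) α).Finite := by
  refine (range (a + 1) ×ˢ range (c + k) : Finset (ℕ × ℕ)).finite_toSet.subset ?_
  rintro ⟨i, j⟩ h
  simp only [coe_product, coe_range, Set.mem_prod, Set.mem_Iio]
  grind [mem_skewCells_hookRect]

theorem rrwPrefix_hookRect_of_gt {c k a r : ℕ} (α : ℕ → ℕ) (hr : a + 1 ≤ r) (c' : ℕ) :
    rrwPrefix (hookRect c k a) α r c' = skewCells (hookRect c k a) α := by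
  ext ⟨i, j'⟩
  simp only [rrwPrefix, Set.mem_ofPred_eq, and_iff_left_iff_imp]
  intro h
  grind [mem_skewCells_hookRect]

/-- `α` is a partition of `k` into at most `a + 1` parts. -/
structure IsBoundedPartition (a k : ℕ) (α : ℕ → ℕ) : Prop where
  succ_le : ∀ i, α (i + 1) ≤ α i
  eq_zero : ∀ i, a + 1 ≤ i → α i = 0
  sum_eq : ∑ i ∈ range (a + 1), α i = k

namespace IsBoundedPartition

variable {a k : ℕ} {α : ℕ → ℕ} (hα : IsBoundedPartition a k α)
include hα

theorem antitone : Antitone α := antitone_nat_of_succ_le hα.succ_le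

theorem le (i : ℕ) : α i ≤ k := by
  rcases lt_or_ge i (a + 1) with h | h
  · exact hα.sum_eq ▸ single_le_sum (fun _ _ => Nat.zero_le _) (mem_range.mpr h)
  · rw [hα.eq_zero i h]
    exact Nat.zero_le k

end IsBoundedPartition

/-- `m r` is the number of `1`s in row `r` of the Kronecker tableau `hookTableau a k α m`. -/
structure Admissible (a k : ℕ) (α m : ℕ → ℕ) : Prop extends IsBoundedPartition a k α where
  m_one : m 1 = α 0 - α 1
  m_le : ∀ r, 2 ≤ r → r ≤ a → m r ≤ α (r - 1) - α r
  m_eq_zero : ∀ r, r = 0 ∨ a + 1 ≤ r → m r = 0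

def tailSum (a : ℕ) (m : ℕ → ℕ) (i : ℕ) : ℕ := ∑ r ∈ Ico i (a + 1), m r

def rowZeroEntry (a k : ℕ) (m : ℕ → ℕ) (j : ℕ) : ℕ :=
  1 + #{r ∈ Icc 1 a | 3 * k - tailSum a m r ≤ j}

def hookTableau (a k : ℕ) (α m : ℕ → ℕ) (p : ℕ × ℕ) : ℕ :=
  if α p.1 ≤ p.2 ∧ p.2 < hookRect (3 * k) k a p.1 then
    if p.1 = 0 then rowZeroEntry a k m p.2 else if p.2 < α p.1 + m p.1 then 1 else p.1 + 1
  else 0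

theorem hookTableau_of_mem {a k : ℕ} {α m : ℕ → ℕ} {p : ℕ × ℕ}
    (h : p ∈ skewCells (hookRect (3 * k) k a) α) :
    hookTableau a k α m p =
      if p.1 = 0 then rowZeroEntry a k m p.2 else if p.2 < α p.1 + m p.1 then 1 else p.1 + 1 :=
  if_pos h

theorem hookTableau_of_not_mem {a k : ℕ} {α m : ℕ → ℕ} {p : ℕ × ℕ}
    (h : p ∉ skewCells (hookRect (3 * k) k a) α) : hookTableau a k α m p = 0 :=
  if_neg h

section TailSum

variable {a : ℕ} {m : ℕ → ℕ}

theorem tailSum_of_gt {i : ℕ} (h : a + 1 ≤ i) : tailSum a m i = 0 := by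
  rw [tailSum, Ico_eq_empty_of_le h, sum_empty]

theorem tailSum_eq_add {i : ℕ} (h : i ≤ a) : tailSum a m i = m i + tailSum a m (i + 1) :=
  sum_eq_sum_Ico_succ_bot (show i < a + 1 by omega) m

theorem tailSum_antitone : Antitone (tailSum a m) :=
  fun _ _ hij => sum_le_sum_of_subset (Ico_subset_Ico hij le_rfl)

end TailSum

section RowZero

variable {a k : ℕ} {m : ℕ → ℕ}

theorem rowZeroEntry_mono : Monotone (rowZeroEntry a k m) := by
  intro j j' h
  unfold rowZeroEntry
  gcongr with r

theorem rowZeroEntry_eq_iff {j e : ℕ} (hj : j < 3 * k) :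
    rowZeroEntry a k m j = e ↔ 1 ≤ e ∧ e ≤ a + 1 ∧
      (e = 1 ∨ 3 * k - tailSum a m (e - 1) ≤ j) ∧ j < 3 * k - tailSum a m e := by
  set n := #{r ∈ Icc 1 a | 3 * k - tailSum a m r ≤ j}
  have hfilter : {r ∈ Icc 1 a | 3 * k - tailSum a m r ≤ j} = Ico 1 (1 + n) := by
    rw [← Ico_add_one_right_eq_Icc]
    exact filter_Ico_eq_Ico_card _ 1 (a + 1) fun r r' _ h _ hr =>
      (Nat.sub_le_sub_left (tailSum_antitone h) _).trans hr
  have hmem : ∀ r, (1 ≤ r ∧ r ≤ a ∧ 3 * k - tailSum a m r ≤ j) ↔ (1 ≤ r ∧ r < 1 + n) := by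
    intro r
    simpa [and_assoc] using congrArg (r ∈ ·) hfilter
  have hn : n ≤ a := (card_filter_le _ _).trans (by simp)
  have hlo : n = 0 ∨ 3 * k - tailSum a m n ≤ j := by
    rcases Nat.eq_zero_or_pos n with h | h
    · exact .inl h
    · exact .inr ((hmem n).2 ⟨h, by omega⟩).2.2
  have hhi : j < 3 * k - tailSum a m (1 + n) := by
    rcases lt_or_ge n a with h | h
    · by_contra hc
      have := (hmem (1 + n)).1 ⟨by omega, by omega, by omega⟩
      omega
    · rw [tailSum_of_gt (by omega)]
      omega
  change 1 + n = e ↔ _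
  constructor
  · rintro rfl
    refine ⟨by omega, by omega, ?_, hhi⟩
    simpa using hlo
  · rintro ⟨he1, hea, hlo', hhi'⟩
    rcases lt_trichotomy (1 + n) e with h | h | h
    · have := tailSum_antitone (a := a) (m := m) (show 1 + n ≤ e - 1 by omega)
      omega
    · exact h
    · have := tailSum_antitone (a := a) (m := m) (show e ≤ n by omega)
      omega

end RowZero

theorem hookTableau_le {a k : ℕ} {α m : ℕ → ℕ} (p : ℕ × ℕ) : hookTableau a k α m p ≤ a + 1 := by
  obtain ⟨i, j⟩ := p
  unfold hookTableau
  split_ifs with h h0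
  · subst h0
    exact ((rowZeroEntry_eq_iff h.2).1 rfl).2.1
  all_goals simp only [hookRect] at h; grind

theorem hookTableau_row_mono {a k : ℕ} {α m : ℕ → ℕ} {i j j' : ℕ}
    (h : (i, j) ∈ skewCells (hookRect (3 * k) k a) α)
    (h' : (i, j') ∈ skewCells (hookRect (3 * k) k a) α) (hjj' : j ≤ j') :
    hookTableau a k α m (i, j) ≤ hookTableau a k α m (i, j') := by
  have := rowZeroEntry_mono (a := a) (k := k) (m := m) hjj'
  simp only [hookTableau, skewCells, Set.mem_ofPred_eq] at h h' ⊢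
  grind

namespace Admissible

variable {a k : ℕ} {α m : ℕ → ℕ} (hM : Admissible a k α m)
include hM

theorem add_m_le {r : ℕ} (h1 : 1 ≤ r) (h2 : r ≤ a) : α r + m r ≤ α (r - 1) := by
  rcases (show r = 1 ∨ 2 ≤ r by omega) with rfl | h
  · have : α 1 ≤ α 0 := hM.succ_le 0
    have := hM.m_one
    simp only [Nat.sub_self]
    omega
  · have := hM.m_le r h h2
    have := hM.antitone (show r - 1 ≤ r by omega)
    omega

theorem tailSum_le {i : ℕ} (hi : 1 ≤ i) : tailSum a m i ≤ α (i - 1) := by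
  induction h : a + 1 - i generalizing i with
  | zero =>
    rw [tailSum_of_gt (by omega)]
    exact Nat.zero_le _
  | succ n ih =>
    rw [tailSum_eq_add (by omega)]
    have := ih (i := i + 1) (by omega) (by omega)
    have := hM.add_m_le hi (by omega)
    simp only [Nat.add_sub_cancel] at *
    omega

theorem tailSum_le_k (i : ℕ) : tailSum a m i ≤ k := by
  have h01 : tailSum a m 0 = tailSum a m 1 := by
    rw [tailSum_eq_add (Nat.zero_le a), hM.m_eq_zero 0 (.inl rfl), zero_add]
  calc tailSum a m i ≤ tailSum a m 0 := tailSum_antitone (Nat.zero_le i)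
    _ ≤ α 0 := h01 ▸ hM.tailSum_le le_rfl
    _ ≤ k := hM.le 0

theorem mem_and_hookTableau_eq_one_iff {i j : ℕ} :
    (i, j) ∈ skewCells (hookRect (3 * k) k a) α ∧ hookTableau a k α m (i, j) = 1 ↔
      (i = 0 ∧ α 0 ≤ j ∧ j < 3 * k - tailSum a m 1) ∨
      (1 ≤ i ∧ i ≤ a ∧ α i ≤ j ∧ j < α i + m i) := by
  have := hM.tailSum_le_k 1
  rcases Nat.eq_zero_or_pos i with rfl | hi
  · have hrow := @rowZeroEntry_eq_iff a k m j 1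
    simp only [hookTableau, mem_skewCells_hookRect, hookRect_zero]
    grind
  · have := hM.add_m_le (r := i)
    have := hM.le (i - 1)
    simp only [hookTableau, mem_skewCells_hookRect, hookRect]
    grind

theorem mem_and_hookTableau_eq_iff {e i j : ℕ} (he2 : 2 ≤ e) (hea : e ≤ a + 1) :
    (i, j) ∈ skewCells (hookRect (3 * k) k a) α ∧ hookTableau a k α m (i, j) = e ↔
      (i = 0 ∧ 3 * k - tailSum a m (e - 1) ≤ j ∧ j < 3 * k - tailSum a m e) ∨
      (i = e - 1 ∧ α (e - 1) + m (e - 1) ≤ j ∧ j < k) := by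
  have := hM.tailSum_le_k (e - 1)
  have := hM.le 0
  rcases Nat.eq_zero_or_pos i with rfl | hi
  · have hrow := @rowZeroEntry_eq_iff a k m j e
    simp only [hookTableau, mem_skewCells_hookRect, hookRect_zero]
    grind
  · have := hM.add_m_le (r := e - 1)
    have := hM.le (e - 1 - 1)
    simp only [hookTableau, mem_skewCells_hookRect, hookRect]
    grind

theorem entryCount_hookTableau_prefix {e : ℕ} (he2 : 2 ≤ e) (hea : e ≤ a + 1) (r c : ℕ) :
    entryCount (hookTableau a k α m) (rrwPrefix (hookRect (3 * k) k a) α r c) e =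
      rowPrefixCount r c 0 (3 * k - tailSum a m (e - 1)) (3 * k - tailSum a m e) +
      rowPrefixCount r c (e - 1) (α (e - 1) + m (e - 1)) k := by
  rw [entryCount_eq_ncard, ← ncard_row_Ico_inter_prefix, ← ncard_row_Ico_inter_prefix,
    ← Set.ncard_union_eq _ ((finite_row_Ico _ _ _).subset fun _ h => h.1)
      ((finite_row_Ico _ _ _).subset fun _ h => h.1)]
  · congr 1
    ext ⟨i, j⟩
    have := hM.mem_and_hookTableau_eq_iff (i := i) (j := j) he2 hea
    simp only [rrwPrefix, Set.mem_ofPred_eq, Set.mem_union] at this ⊢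
    grind
  · rw [Set.disjoint_left]
    rintro ⟨i, j⟩ ⟨⟨rfl, -⟩, -⟩ ⟨⟨h, -⟩, -⟩
    omega

theorem entryCount_hookTableau_one :
    entryCount (hookTableau a k α m) (skewCells (hookRect (3 * k) k a) α) 1 = 3 * k - α 0 := by
  have hS := hM.tailSum_le_k 1
  have hα := hM.le 0
  have hset : {p | p ∈ skewCells (hookRect (3 * k) k a) α ∧ hookTableau a k α m p = 1} =
      {p : ℕ × ℕ | p.1 < a + 1 ∧ α p.1 ≤ p.2 ∧
        p.2 < if p.1 = 0 then 3 * k - tailSum a m 1 else α p.1 + m p.1} := by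
    ext ⟨i, j⟩
    have := hM.mem_and_hookTableau_eq_one_iff (i := i) (j := j)
    simp only [Set.mem_ofPred_eq] at this ⊢
    grind
  have hsum : ∑ i ∈ range a, (α (i + 1) + m (i + 1) - α (i + 1)) = tailSum a m 1 := by
    simp only [Nat.add_sub_cancel_left, tailSum, sum_Ico_eq_sum_range, Nat.add_sub_cancel]
    exact sum_congr rfl fun i _ => by rw [add_comm]
  rw [entryCount_eq_ncard, hset, ncard_rows_Ico (a + 1) α
    (fun ρ => if ρ = 0 then 3 * k - tailSum a m 1 else α ρ + m ρ), sum_range_succ']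
  simp only [Nat.add_one_ne_zero, if_false, if_true, hsum]
  omega

theorem entryCount_hookTableau_one_prefix_ge {r : ℕ} (hr : 1 ≤ r) (c : ℕ) :
    3 * k - tailSum a m 1 - α 0 ≤
      entryCount (hookTableau a k α m) (rrwPrefix (hookRect (3 * k) k a) α r c) 1 := by
  rw [entryCount_eq_ncard, ← ncard_row_Ico 0 (α 0) (3 * k - tailSum a m 1)]
  refine Set.ncard_le_ncard ?_
    ((finite_skewCells_hookRect (3 * k) k a α).subset fun _ h => h.1.1)
  rintro ⟨i, j⟩ ⟨rfl, h⟩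
  have := (hM.mem_and_hookTableau_eq_one_iff (i := 0) (j := j)).2 (.inl ⟨rfl, h⟩)
  exact ⟨⟨this.1, .inl hr⟩, this.2⟩

theorem entryCount_hookTableau_one_row_one (ha : 1 ≤ a) :
    entryCount (hookTableau a k α m) {p | p ∈ skewCells (hookRect (3 * k) k a) α ∧ p.1 = 1} 1 =
      m 1 := by
  rw [entryCount_eq_ncard, ← Nat.add_sub_cancel_left (n := α 1) (m := m 1),
    ← ncard_row_Ico 1]
  congr 1
  ext ⟨i, j⟩
  have := hM.mem_and_hookTableau_eq_one_iff (i := i) (j := j)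
  simp only [Set.mem_ofPred_eq] at this ⊢
  grind

theorem hookTableau_col_strict {i i' j : ℕ} (h : (i, j) ∈ skewCells (hookRect (3 * k) k a) α)
    (h' : (i', j) ∈ skewCells (hookRect (3 * k) k a) α) (hii' : i < i') :
    hookTableau a k α m (i, j) < hookTableau a k α m (i', j) := by
  rw [mem_skewCells_hookRect] at h'
  have := hM.add_m_le (r := i') (by omega) (by omega)
  have := hM.antitone (show i ≤ i' - 1 by omega)
  have hone := (hM.mem_and_hookTableau_eq_one_iff (i := 0) (j := j))
  have := hM.tailSum_le_k 1
  have := hookTableau_le (a := a) (k := k) (α := α) (m := m) (i, j)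
  rw [mem_skewCells_hookRect] at h hone
  simp only [hookTableau, hookRect] at hone ⊢
  grind

theorem entryCount_hookTableau (v : ℕ) :
    entryCount (hookTableau a k α m) (skewCells (hookRect (3 * k) k a) α) (v + 1) =
      hookRect (3 * k) k a v - α v := by
  rcases (show v = 0 ∨ (1 ≤ v ∧ v ≤ a) ∨ a + 1 ≤ v by omega) with rfl | ⟨h1, h2⟩ | h
  · exact hM.entryCount_hookTableau_one
  · rw [← rrwPrefix_hookRect_of_gt α (le_refl (a + 1)) 0,
      hM.entryCount_hookTableau_prefix (by omega) (by omega), hookRect_of_le h1 h2]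
    have := hM.add_m_le h1 h2
    have := hM.le (v - 1)
    have := tailSum_eq_add (m := m) h2
    have := hM.tailSum_le_k v
    simp only [rowPrefixCount, Nat.add_sub_cancel]
    split_ifs <;> omega
  · rw [hM.eq_zero v h, Nat.sub_zero, (entryCount_eq_zero_iff _ _
      (finite_skewCells_hookRect _ _ _ _)).2 fun p _ => by
        have := hookTableau_le (a := a) (k := k) (α := α) (m := m) p
        omega]
    simp only [hookRect]
    split_ifs <;> omega

theorem lattice_hookTableau_zero (ha : 1 ≤ a) (r c : ℕ) :
    entryCount (hookTableau a k α m) (rrwPrefix (hookRect (3 * k) k a) α r c) 2 + α 1 ≤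
      entryCount (hookTableau a k α m) (rrwPrefix (hookRect (3 * k) k a) α r c) 1 + α 0 := by
  rw [hM.entryCount_hookTableau_prefix le_rfl (by omega)]
  have : tailSum a m 1 = m 1 + tailSum a m 2 := tailSum_eq_add ha
  have : α 1 + m 1 ≤ α 0 := hM.add_m_le le_rfl ha
  have := hM.le 0
  have := hM.tailSum_le_k 1
  -- once the first row is read, its ones alone outnumber all the `2`s
  have hones : r = 0 ∨ 3 * k - tailSum a m 1 - α 0 ≤
      entryCount (hookTableau a k α m) (rrwPrefix (hookRect (3 * k) k a) α r c) 1 := by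
    rcases Nat.eq_zero_or_pos r with h | h
    exacts [.inl h, .inr (hM.entryCount_hookTableau_one_prefix_ge h c)]
  simp only [rowPrefixCount, Nat.reduceSub] at hones ⊢
  generalize hA : 3 * k - tailSum a m 1 = A at *
  generalize hB : 3 * k - tailSum a m 2 = B at *
  split_ifs <;> omega

theorem lattice_hookTableau_of_le {v : ℕ} (h1 : 1 ≤ v) (h2 : v + 1 ≤ a) (r c : ℕ) :
    entryCount (hookTableau a k α m) (rrwPrefix (hookRect (3 * k) k a) α r c) (v + 2) +
        α (v + 1) ≤
      entryCount (hookTableau a k α m) (rrwPrefix (hookRect (3 * k) k a) α r c) (v + 1) +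
        α v := by
  rw [hM.entryCount_hookTableau_prefix (e := v + 2) (by omega) (by omega),
    hM.entryCount_hookTableau_prefix (e := v + 1) (by omega) (by omega)]
  have : α v + m v ≤ α (v - 1) := hM.add_m_le h1 (by omega)
  have : α (v + 1) + m (v + 1) ≤ α v := hM.add_m_le (r := v + 1) (by omega) h2
  have : tailSum a m v = m v + tailSum a m (v + 1) := tailSum_eq_add (by omega)
  have : tailSum a m (v + 1) = m (v + 1) + tailSum a m (v + 2) := tailSum_eq_add h2
  have := hM.tailSum_le_k v
  have := hM.le (v - 1)
  simp only [rowPrefixCount, Nat.add_sub_cancel, show v + 2 - 1 = v + 1 by omega]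
  generalize hA : 3 * k - tailSum a m v = A
  generalize hB : 3 * k - tailSum a m (v + 1) = B
  generalize hC : 3 * k - tailSum a m (v + 2) = C
  split_ifs <;> omega

theorem lattice_hookTableau (ha : 1 ≤ a) (r c v : ℕ) :
    entryCount (hookTableau a k α m) (rrwPrefix (hookRect (3 * k) k a) α r c) (v + 2) +
        α (v + 1) ≤
      entryCount (hookTableau a k α m) (rrwPrefix (hookRect (3 * k) k a) α r c) (v + 1) +
        α v := by
  rcases (show v = 0 ∨ (1 ≤ v ∧ v + 1 ≤ a) ∨ a ≤ v by omega) with rfl | ⟨h1, h2⟩ | h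
  · exact hM.lattice_hookTableau_zero ha r c
  · exact hM.lattice_hookTableau_of_le h1 h2 r c
  · rw [(entryCount_eq_zero_iff _ _ ((finite_skewCells_hookRect _ _ _ _).subset fun _ h => h.1)).2
      fun p _ => by have := hookTableau_le (a := a) (k := k) (α := α) (m := m) p; omega,
      hM.eq_zero _ (by omega)]
    omega

theorem isKroneckerTableau (ha : 1 ≤ a) :
    IsKroneckerTableau (hookRect (3 * k) k a) (hookRect (3 * k) k a) α (hookTableau a k α m) := by
  refine ⟨fun i => ?_, fun _ => hookTableau_of_not_mem, fun p hp => ?_,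
    fun _ _ _ => hookTableau_row_mono, fun _ _ _ => hM.hookTableau_col_strict,
    hM.entryCount_hookTableau, hM.lattice_hookTableau ha, ?_⟩
  · have := hM.le i
    have := hM.eq_zero i
    simp only [hookRect]
    split_ifs <;> omega
  · rw [hookTableau_of_mem hp]
    split_ifs with h0
    · have hj : p.2 < hookRect (3 * k) k a p.1 := hp.2
      rw [h0, hookRect_zero] at hj
      exact ((rowZeroEntry_eq_iff hj).1 rfl).1
    all_goals omega
  · rcases (hM.succ_le 0).eq_or_lt with h | h
    · exact .inl h.symm
    · exact .inr ⟨h, .inl (by rw [hM.entryCount_hookTableau_one_row_one ha, hM.m_one])⟩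

end Admissible

def onesCount (a k : ℕ) (α : ℕ → ℕ) (T : ℕ × ℕ → ℕ) (r : ℕ) : ℕ :=
  if 1 ≤ r ∧ r ≤ a then #{j ∈ Ico (α r) k | T (r, j) = 1} else 0

section Classification

variable {a k : ℕ} {α : ℕ → ℕ} {T : ℕ × ℕ → ℕ} (hα : IsBoundedPartition a k α)
  (hT : IsKroneckerTableau (hookRect (3 * k) k a) (hookRect (3 * k) k a) α T)
include hT

theorem filter_row_eq_one {r : ℕ} (h1 : 1 ≤ r) (h2 : r ≤ a) :
    {j ∈ Ico (α r) k | T (r, j) = 1} = Ico (α r) (α r + onesCount a k α T r) := by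
  obtain ⟨-, -, hpos, hrow, -⟩ := hT
  rw [onesCount, if_pos ⟨h1, h2⟩]
  refine filter_Ico_eq_Ico_card _ _ _ fun j j' hj' hjj' hj hone => ?_
  have hp : (r, j) ∈ skewCells (hookRect (3 * k) k a) α :=
    (mem_skewCells_hookRect_of_le h1 h2).2 ⟨by omega, hj⟩
  have hp' : (r, j') ∈ skewCells (hookRect (3 * k) k a) α :=
    (mem_skewCells_hookRect_of_le h1 h2).2 ⟨hj', by omega⟩
  have := hrow r j' j hp' hp hjj'
  have := hpos _ hp'
  omega

include hα

theorem entry_le {p : ℕ × ℕ} (hp : p ∈ skewCells (hookRect (3 * k) k a) α) : T p ≤ a + 1 := by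
  obtain ⟨-, -, -, -, -, htype, -⟩ := hT
  by_contra! h
  have := htype (T p - 1)
  rw [hα.eq_zero _ (by omega), Nat.sub_add_cancel (by omega)] at this
  refine (entryCount_eq_zero_iff T (T p) (finite_skewCells_hookRect _ _ _ _)).1 ?_ p hp rfl
  rw [this]
  simp only [hookRect]
  split_ifs <;> omega

theorem entry_le_row_add_one {i j : ℕ} (hi : 1 ≤ i)
    (hp : (i, j) ∈ skewCells (hookRect (3 * k) k a) α) : T (i, j) ≤ i + 1 := by
  have ⟨_, _, _, _, hcol, _⟩ := hT
  rw [mem_skewCells_hookRect] at hp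
  have hmem : ∀ t, i + t ≤ a → (i + t, j) ∈ skewCells (hookRect (3 * k) k a) α :=
    fun t ht => mem_skewCells_hookRect.2 <| .inr
      ⟨by omega, ht, (hα.antitone (le_add_right le_rfl)).trans (by omega), by omega⟩
  have hdown : ∀ t, i + t ≤ a → T (i, j) + t ≤ T (i + t, j) := by
    intro t
    induction t with
    | zero => simp
    | succ t ih =>
      intro ht
      have := hcol _ _ j (hmem t (by omega)) (hmem (t + 1) ht) (by omega)
      have := ih (by omega)
      omega
  have := hdown (a - i) (by omega)
  have := entry_le hα hT (hmem (a - i) (by omega))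
  omega

theorem entryCount_suffix_le {v : ℕ} (hv1 : 1 ≤ v) (hv2 : v + 1 ≤ a) (r c : ℕ) :
    entryCount T (skewCells (hookRect (3 * k) k a) α \ rrwPrefix (hookRect (3 * k) k a) α r c)
        (v + 1) ≤
      entryCount T (skewCells (hookRect (3 * k) k a) α \ rrwPrefix (hookRect (3 * k) k a) α r c)
        (v + 2) := by
  obtain ⟨-, -, -, -, -, htype, hlat, -⟩ := hT
  have hsplit := fun v => entryCount_add_diff T v (fun _ (h : _ ∈ rrwPrefix _ _ r c) => h.1)
    (finite_skewCells_hookRect (3 * k) k a α)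
  have h1 := htype v
  have h2 : entryCount T _ (v + 2) = _ := htype (v + 1)
  rw [hookRect_of_le hv1 (by omega)] at h1
  rw [hookRect_of_le (by omega) hv2] at h2
  have := hlat r c v
  have := hsplit (v + 1)
  have := hsplit (v + 2)
  have := hα.le v
  have := hα.succ_le v
  omega

theorem entry_eq_one_or_eq_row_add_one_of_below {i j : ℕ} (hi : 1 ≤ i)
    (hp : (i, j) ∈ skewCells (hookRect (3 * k) k a) α)
    (hbelow : ∀ i' j', i < i' → (i', j') ∈ skewCells (hookRect (3 * k) k a) α →
      T (i', j') = 1 ∨ T (i', j') = i' + 1) :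
    T (i, j) = 1 ∨ T (i, j) = i + 1 := by
  have ⟨_, _, hpos, hrow, _⟩ := hT
  have := entry_le_row_add_one hα hT hi hp
  have := hpos _ hp
  have hia : i ≤ a := by grind [mem_skewCells_hookRect]
  by_contra! h
  set e := T (i, j)
  -- the part of the reading word from `(i, j)` on contains an `e` but no `e + 1`
  set suffix := skewCells (hookRect (3 * k) k a) α \ rrwPrefix (hookRect (3 * k) k a) α i (j + 1)
  have hfin : suffix.Finite := (finite_skewCells_hookRect _ _ _ _).sdiff
  have hpos : entryCount T suffix e ≠ 0 := by
    rw [Ne, entryCount_eq_zero_iff _ _ hfin]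
    exact fun h => h (i, j) ⟨hp, fun h => by rcases h.2 with h | h <;> omega⟩ rfl
  have hzero : entryCount T suffix (e + 1) = 0 := by
    rw [entryCount_eq_zero_iff _ _ hfin]
    rintro ⟨i', j'⟩ ⟨hp', hnot⟩ he
    have : ¬(i' < i ∨ i' = i ∧ j + 1 ≤ j') := fun h => hnot ⟨hp', h⟩
    rcases (show i < i' ∨ (i' = i ∧ j' ≤ j) by omega) with h' | ⟨rfl, h'⟩
    · have := hbelow i' j' h' hp'
      omega
    · have := hrow i' j' j hp' hp h'
      omega
  have hle : entryCount T suffix e ≤ entryCount T suffix (e + 1) := by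
    have := entryCount_suffix_le hα hT (v := e - 1) (by omega) (by omega) i (j + 1)
    rwa [show e - 1 + 1 = e by omega, show e - 1 + 2 = e + 1 by omega] at this
  omega

theorem entry_eq_one_or_eq_row_add_one {i j : ℕ} (hi : 1 ≤ i)
    (hp : (i, j) ∈ skewCells (hookRect (3 * k) k a) α) :
    T (i, j) = 1 ∨ T (i, j) = i + 1 := by
  induction hn : a - i using Nat.strong_induction_on generalizing i j with
  | _ n ih =>
    refine entry_eq_one_or_eq_row_add_one_of_below hα hT hi hp fun i' j' hii' hp' => ?_
    have : i' ≤ a := by grind [mem_skewCells_hookRect]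
    exact ih (a - i') (by omega) (by omega) hp' rfl

theorem add_onesCount_le {r : ℕ} (h1 : 1 ≤ r) (h2 : r ≤ a) :
    α r + onesCount a k α T r ≤ α (r - 1) := by
  have ⟨_, _, hpos, _, hcol, _⟩ := hT
  by_contra! h
  -- the last `1` of row `r` would lie below a cell of row `r - 1`
  have hlast : α r + onesCount a k α T r - 1 ∈ {j ∈ Ico (α r) k | T (r, j) = 1} := by
    rw [filter_row_eq_one hT h1 h2, mem_Ico]
    have := hα.antitone (show r - 1 ≤ r by omega)
    omega
  generalize hj : α r + onesCount a k α T r - 1 = j at hlast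
  rw [mem_filter, mem_Ico] at hlast
  have hp : (r, j) ∈ skewCells (hookRect (3 * k) k a) α :=
    (mem_skewCells_hookRect_of_le h1 h2).2 hlast.1
  have hp' : (r - 1, j) ∈ skewCells (hookRect (3 * k) k a) α := by
    rcases (show r - 1 = 0 ∨ 1 ≤ r - 1 by omega) with h0 | h0
    · rw [h0] at h ⊢
      rw [mem_skewCells_hookRect_zero]
      omega
    · rw [mem_skewCells_hookRect_of_le h0 (by omega)]
      omega
  have := hcol _ _ j hp' hp (by omega)
  have := hpos _ hp'
  omega

theorem entry_eq_ite_of_mem_row {r j : ℕ} (h1 : 1 ≤ r) (h2 : r ≤ a)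
    (hp : (r, j) ∈ skewCells (hookRect (3 * k) k a) α) :
    T (r, j) = if j < α r + onesCount a k α T r then 1 else r + 1 := by
  have hmem := congrArg (j ∈ ·) (filter_row_eq_one hT h1 h2)
  have := entry_eq_one_or_eq_row_add_one hα hT h1 hp
  rw [mem_skewCells_hookRect_of_le h1 h2] at hp
  simp only [mem_filter, mem_Ico, eq_iff_iff] at hmem
  split_ifs with h
  · exact (hmem.2 ⟨hp.1, h⟩).2
  · grind

theorem entryCount_row_self {r : ℕ} (h1 : 1 ≤ r) (h2 : r ≤ a) :
    entryCount T {p | p ∈ skewCells (hookRect (3 * k) k a) α ∧ p.1 = r} (r + 1) =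
      k - α r - onesCount a k α T r := by
  have hrow (j : ℕ) (hj : α r ≤ j ∧ j < k) := entry_eq_ite_of_mem_row hα hT h1 h2
    ((mem_skewCells_hookRect_of_le h1 h2).2 hj)
  have : {j ∈ Ico (α r) k | T (r, j) = r + 1} = Ico (α r + onesCount a k α T r) k := by
    ext j
    have := add_onesCount_le hα hT h1 h2
    have := hα.le (r - 1)
    simp only [mem_filter, mem_Ico]
    constructor
    · rintro ⟨hj, he⟩
      rw [hrow j hj] at he
      grind
    · intro hj
      rw [hrow j (by omega), if_neg (by omega)]
      omega
  rw [entryCount_row T (r + 1) fun j => mem_skewCells_hookRect_of_le h1 h2, this, Nat.card_Ico,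
    Nat.sub_sub]

theorem entryCount_row_zero {v : ℕ} (h1 : 1 ≤ v) (h2 : v ≤ a) :
    entryCount T {p | p ∈ skewCells (hookRect (3 * k) k a) α ∧ p.1 = 0} (v + 1) =
      onesCount a k α T v := by
  have hsplit := entryCount_add_diff T (v + 1)
    (S' := {p | p ∈ skewCells (hookRect (3 * k) k a) α ∧ p.1 = 0}) (fun _ h => h.1)
    (finite_skewCells_hookRect (3 * k) k a α)
  have hrest : entryCount T (skewCells (hookRect (3 * k) k a) α \
        {p | p ∈ skewCells (hookRect (3 * k) k a) α ∧ p.1 = 0}) (v + 1) =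
      entryCount T {p | p ∈ skewCells (hookRect (3 * k) k a) α ∧ p.1 = v} (v + 1) := by
    refine entryCount_congr _ _ fun ⟨i, j⟩ he => ?_
    simp only [Set.mem_sdiff, Set.mem_ofPred_eq, not_and]
    constructor
    · rintro ⟨hp, hi⟩
      have := entry_eq_one_or_eq_row_add_one hα hT (Nat.pos_of_ne_zero (hi hp)) hp
      exact ⟨hp, by omega⟩
    · rintro ⟨hp, rfl⟩
      exact ⟨hp, fun _ => by omega⟩
  have ⟨_, _, _, _, _, htype, _⟩ := hT
  have := htype v
  rw [hookRect_of_le h1 h2] at this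
  have := entryCount_row_self hα hT h1 h2
  have := add_onesCount_le hα hT h1 h2
  have := hα.le (v - 1)
  omega

theorem card_filter_row_zero_le {e : ℕ} (he1 : 1 ≤ e) (he2 : e ≤ a + 1) :
    α 0 + #{j ∈ Ico (α 0) (3 * k) | T (0, j) ≤ e} = 3 * k - tailSum a (onesCount a k α T) e := by
  have := hα.le 0
  induction h : a + 1 - e generalizing e with
  | zero =>
    obtain rfl : e = a + 1 := by omega
    rw [filter_true_of_mem fun j hj => entry_le hα hT
      (mem_skewCells_hookRect_zero.2 (mem_Ico.1 hj)), Nat.card_Ico, tailSum_of_gt le_rfl]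
    omega
  | succ n ih =>
    have hsplit : {j ∈ Ico (α 0) (3 * k) | T (0, j) ≤ e + 1} =
        {j ∈ Ico (α 0) (3 * k) | T (0, j) ≤ e} ∪ {j ∈ Ico (α 0) (3 * k) | T (0, j) = e + 1} := by
      rw [← filter_or]
      exact filter_congr fun _ _ => by omega
    have hdisj : Disjoint {j ∈ Ico (α 0) (3 * k) | T (0, j) ≤ e}
        {j ∈ Ico (α 0) (3 * k) | T (0, j) = e + 1} :=
      disjoint_filter.2 fun _ _ _ => by omega
    have := ih (e := e + 1) (by omega) (by omega) (by omega)
    rw [hsplit, card_union_of_disjoint hdisj, ← entryCount_row T (e + 1)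
      fun j => mem_skewCells_hookRect_zero, entryCount_row_zero hα hT he1 (by omega)] at this
    have := tailSum_eq_add (m := onesCount a k α T) (show e ≤ a by omega)
    omega

theorem entry_le_iff_of_mem_row_zero {e j : ℕ} (he1 : 1 ≤ e) (he2 : e ≤ a + 1)
    (hp : (0, j) ∈ skewCells (hookRect (3 * k) k a) α) :
    T (0, j) ≤ e ↔ j < 3 * k - tailSum a (onesCount a k α T) e := by
  have ⟨_, _, _, hrow, _⟩ := hT
  have hfilter := filter_Ico_eq_Ico_card (fun j => T (0, j) ≤ e) (α 0) (3 * k)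
    fun j j' hj' hjj' hj he => (hrow 0 j' j (mem_skewCells_hookRect_zero.2 ⟨hj', by omega⟩)
      (mem_skewCells_hookRect_zero.2 ⟨by omega, hj⟩) hjj').trans he
  have hmem := congrArg (j ∈ ·) hfilter
  rw [card_filter_row_zero_le hα hT he1 he2] at hmem
  simpa [mem_skewCells_hookRect_zero.1 hp] using hmem

theorem entry_eq_rowZeroEntry {j : ℕ} (hp : (0, j) ∈ skewCells (hookRect (3 * k) k a) α) :
    T (0, j) = rowZeroEntry a k (onesCount a k α T) j := by
  have ⟨_, _, hpos, _⟩ := hT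
  have := hpos _ hp
  have := entry_le hα hT hp
  have hle (e : ℕ) (he1 : 1 ≤ e) (he2 : e ≤ a + 1) :=
    entry_le_iff_of_mem_row_zero hα hT (j := j) he1 he2 hp
  refine ((rowZeroEntry_eq_iff (mem_skewCells_hookRect_zero.1 hp).2).2
    ⟨by omega, by omega, ?_, (hle _ (by omega) (by omega)).1 le_rfl⟩).symm
  rcases (show T (0, j) = 1 ∨ 2 ≤ T (0, j) by omega) with h | h
  · exact .inl h
  · refine .inr (not_lt.1 fun hlt => ?_)
    have := (hle (T (0, j) - 1) (by omega) (by omega)).2 hlt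
    omega

theorem admissible_onesCount (ha : 1 ≤ a) : Admissible a k α (onesCount a k α T) where
  toIsBoundedPartition := hα
  m_one := by
    have : α 1 + onesCount a k α T 1 ≤ α 0 := add_onesCount_le hα hT le_rfl ha
    have ⟨_, _, _, _, _, _, _, hcond⟩ := hT
    rcases hcond with h | ⟨-, h | h⟩
    · omega
    · rw [entryCount_row T 1 fun j => mem_skewCells_hookRect_of_le le_rfl ha] at h
      rwa [onesCount, if_pos ⟨le_rfl, ha⟩]
    · rwa [entryCount_row_zero hα hT le_rfl ha] at h
  m_le r h2 hra := by
    have := add_onesCount_le hα hT (by omega) hra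
    omega
  m_eq_zero r hr := if_neg (by omega)

theorem eq_hookTableau : T = hookTableau a k α (onesCount a k α T) := by
  funext ⟨i, j⟩
  by_cases hp : (i, j) ∈ skewCells (hookRect (3 * k) k a) α
  · simp only [hookTableau_of_mem hp]
    rcases eq_or_ne i 0 with rfl | hi
    · exact entry_eq_rowZeroEntry hα hT hp
    · have hia : i ≤ a := by grind [mem_skewCells_hookRect]
      rw [if_neg hi, entry_eq_ite_of_mem_row hα hT (by omega) hia hp]
  · rw [hT.2.1 _ hp, hookTableau_of_not_mem hp]

end Classification

theorem Admissible.onesCount_hookTableau {a k : ℕ} {α m : ℕ → ℕ} (hM : Admissible a k α m) :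
    onesCount a k α (hookTableau a k α m) = m := by
  funext r
  unfold onesCount
  split_ifs with hr
  · have : {j ∈ Ico (α r) k | hookTableau a k α m (r, j) = 1} = Ico (α r) (α r + m r) := by
      ext j
      have := hM.add_m_le hr.1 hr.2
      have := hM.le (r - 1)
      have := hM.mem_and_hookTableau_eq_one_iff (i := r) (j := j)
      rw [mem_skewCells_hookRect_of_le hr.1 hr.2] at this
      simp only [mem_filter, mem_Ico]
      grind
    rw [this, Nat.card_Ico, Nat.add_sub_cancel_left]
  · exact (hM.m_eq_zero r (by omega)).symm

def zeroExtend (a : ℕ) (q : Fin a → ℕ) (n : ℕ) : ℕ := if h : n < a then q ⟨n, h⟩ else 0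

theorem zeroExtend_restrict {a : ℕ} {f : ℕ → ℕ} (hf : ∀ n, a ≤ n → f n = 0) :
    zeroExtend a (fun i => f i) = f := by
  funext n
  unfold zeroExtend
  split_ifs with h
  · rfl
  · exact (hf n (by omega)).symm

theorem zeroExtend_of_le {a : ℕ} (q : Fin a → ℕ) {n : ℕ} (h : a ≤ n) : zeroExtend a q n = 0 :=
  dif_neg (by omega)

theorem sum_fin_mul_eq_sum_range_zeroExtend {a : ℕ} (q : Fin a → ℕ) (w : ℕ → ℕ) :
    ∑ i : Fin a, w i * q i = ∑ i ∈ range a, w i * zeroExtend a q i := by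
  rw [← Fin.sum_univ_eq_sum_range]
  exact sum_congr rfl fun i _ => by rw [zeroExtend, dif_pos i.isLt]

/-- The number of parts of weight `j + 1`, in both colours; for the coloured partition attached
to `(α, m)` this is `α j - α (j + 1)`. -/
def gaps (a : ℕ) (p : (Fin a → ℕ) × (Fin a → ℕ)) : ℕ → ℕ
  | 0 => zeroExtend a p.1 0
  | j + 1 => zeroExtend a p.1 (j + 1) + zeroExtend a p.2 j

def onesOf (a : ℕ) (p : (Fin a → ℕ) × (Fin a → ℕ)) : ℕ → ℕ
  | 0 => 0
  | r + 1 => zeroExtend a p.1 r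

def toColoured (a : ℕ) (α m : ℕ → ℕ) : (Fin a → ℕ) × (Fin a → ℕ) :=
  (fun i => m (i + 1), fun i => α (i + 1) - α (i + 2) - m (i + 2))

theorem sum_tailSum_gaps {a : ℕ} (p : (Fin a → ℕ) × (Fin a → ℕ)) :
    ∑ i ∈ range (a + 1), tailSum a (gaps a p) i =
      ∑ i : Fin a, ((i : ℕ) + 1) * p.1 i + ∑ i : Fin a, ((i : ℕ) + 2) * p.2 i := by
  have h1 : ∑ i ∈ range a, (i + 1) * zeroExtend a p.1 i =
      ∑ i ∈ range a, (i + 2) * zeroExtend a p.1 (i + 1) + zeroExtend a p.1 0 := by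
    have := sum_range_succ (fun i => (i + 1) * zeroExtend a p.1 i) a
    rw [sum_range_succ', zeroExtend_of_le p.1 le_rfl, mul_zero, add_zero] at this
    simpa using this.symm
  unfold tailSum
  rw [sum_fin_mul_eq_sum_range_zeroExtend p.1 (· + 1),
    sum_fin_mul_eq_sum_range_zeroExtend p.2 (· + 2), sum_range_sum_Ico, sum_range_succ', h1]
  simp only [gaps, mul_add, sum_add_distrib]
  ring

namespace Admissible

variable {a k : ℕ} {α m : ℕ → ℕ} (hM : Admissible a k α m)
include hM

theorem zeroExtend_toColoured_fst : zeroExtend a (toColoured a α m).1 = fun n => m (n + 1) :=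
  zeroExtend_restrict fun _ h => hM.m_eq_zero _ (.inr (by omega))

theorem zeroExtend_toColoured_snd :
    zeroExtend a (toColoured a α m).2 = fun n => α (n + 1) - α (n + 2) - m (n + 2) :=
  zeroExtend_restrict (f := fun n => α (n + 1) - α (n + 2) - m (n + 2)) fun n h => by
    rw [hM.eq_zero (n + 1) (by omega), Nat.zero_sub, Nat.zero_sub]

theorem gaps_toColoured {j : ℕ} (hj : j ≤ a) : gaps a (toColoured a α m) j = α j - α (j + 1) := by
  cases j with
  | zero => simp [gaps, hM.zeroExtend_toColoured_fst, hM.m_one]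
  | succ j =>
    simp only [gaps, hM.zeroExtend_toColoured_fst, hM.zeroExtend_toColoured_snd,
      show j + 1 + 1 = j + 2 from rfl]
    have : m (j + 2) ≤ α (j + 1) - α (j + 2) := by
      rcases (show j + 2 ≤ a ∨ a + 1 ≤ j + 2 by omega) with h | h
      · exact hM.m_le (j + 2) (by omega) h
      · rw [hM.m_eq_zero _ (.inr h)]
        exact Nat.zero_le _
    omega

theorem tailSum_gaps_toColoured : tailSum a (gaps a (toColoured a α m)) = α := by
  funext i
  rcases le_or_gt i (a + 1) with hi | hi
  · rw [tailSum, sum_congr rfl fun j hj => hM.gaps_toColoured (by simp at hj; omega),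
      sum_Ico_tsub_succ_of_antitone hM.antitone hi, hM.eq_zero (a + 1) le_rfl, Nat.sub_zero]
  · rw [tailSum_of_gt hi.le, hM.eq_zero i hi.le]

theorem onesOf_toColoured : onesOf a (toColoured a α m) = m := by
  funext r
  cases r with
  | zero => exact (hM.m_eq_zero 0 (.inl rfl)).symm
  | succ r => simp [onesOf, hM.zeroExtend_toColoured_fst]

theorem weight_toColoured :
    ∑ i : Fin a, ((i : ℕ) + 1) * (toColoured a α m).1 i +
      ∑ i : Fin a, ((i : ℕ) + 2) * (toColoured a α m).2 i = k := by
  rw [← sum_tailSum_gaps, hM.tailSum_gaps_toColoured, hM.sum_eq]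

end Admissible

section Coloured

variable {a k : ℕ} {p : (Fin a → ℕ) × (Fin a → ℕ)}

theorem admissible_of_weight
    (hp : ∑ i : Fin a, ((i : ℕ) + 1) * p.1 i + ∑ i : Fin a, ((i : ℕ) + 2) * p.2 i = k) :
    Admissible a k (tailSum a (gaps a p)) (onesOf a p) where
  succ_le i := tailSum_antitone (Nat.le_succ i)
  eq_zero i := tailSum_of_gt
  sum_eq := (sum_tailSum_gaps p).trans hp
  m_one := by
    rw [tailSum_eq_add (Nat.zero_le a)]
    simp [onesOf, gaps]
  m_le r h2 hra := by
    obtain ⟨r, rfl⟩ : ∃ s, r = s + 2 := ⟨r - 2, by omega⟩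
    rw [show r + 2 - 1 = r + 1 by omega, tailSum_eq_add (by omega)]
    simp [onesOf, gaps]
  m_eq_zero r hr := by
    rcases hr with rfl | hr
    · rfl
    · obtain ⟨r, rfl⟩ : ∃ s, r = s + 1 := ⟨r - 1, by omega⟩
      exact zeroExtend_of_le p.1 (by omega)

theorem toColoured_tailSum_gaps : toColoured a (tailSum a (gaps a p)) (onesOf a p) = p := by
  ext i
  · simp [toColoured, onesOf, zeroExtend]
  · have : tailSum a (gaps a p) (i + 1) = gaps a p (i + 1) + tailSum a (gaps a p) (i + 2) :=
      tailSum_eq_add (by omega)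
    simp only [toColoured, this, onesOf, gaps, zeroExtend, dif_pos i.isLt, Fin.eta]
    omega

end Coloured

def tableauEquivAdmissible {a k : ℕ} (ha : 1 ≤ a) :
    {x : (ℕ → ℕ) × (ℕ × ℕ → ℕ) //
      (∀ i, x.1 (i + 1) ≤ x.1 i) ∧
      (∀ i, a + 1 ≤ i → x.1 i = 0) ∧
      (∑ i ∈ Finset.range (a + 1), x.1 i) = k ∧
      IsKroneckerTableau (hookRect (3 * k) k a) (hookRect (3 * k) k a) x.1 x.2} ≃
    {w : (ℕ → ℕ) × (ℕ → ℕ) // Admissible a k w.1 w.2} where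
  toFun x := ⟨(x.1.1, onesCount a k x.1.1 x.1.2),
    admissible_onesCount ⟨x.2.1, x.2.2.1, x.2.2.2.1⟩ x.2.2.2.2 ha⟩
  invFun w := ⟨(w.1.1, hookTableau a k w.1.1 w.1.2),
    w.2.succ_le, w.2.eq_zero, w.2.sum_eq, w.2.isKroneckerTableau ha⟩
  left_inv x :=
    Subtype.ext <| Prod.ext rfl (eq_hookTableau ⟨x.2.1, x.2.2.1, x.2.2.2.1⟩ x.2.2.2.2).symm
  right_inv w := Subtype.ext <| Prod.ext rfl w.2.onesCount_hookTableau

def admissibleEquivColoured {a k : ℕ} :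
    {w : (ℕ → ℕ) × (ℕ → ℕ) // Admissible a k w.1 w.2} ≃
    {p : (Fin a → ℕ) × (Fin a → ℕ) //
      ∑ i : Fin a, ((i : ℕ) + 1) * p.1 i + ∑ i : Fin a, ((i : ℕ) + 2) * p.2 i = k} where
  toFun w := ⟨toColoured a w.1.1 w.1.2, w.2.weight_toColoured⟩
  invFun p := ⟨(tailSum a (gaps a p.1), onesOf a p.1), admissible_of_weight p.2⟩
  left_inv w := Subtype.ext <| Prod.ext w.2.tailSum_gaps_toColoured w.2.onesOf_toColoured
  right_inv _ := Subtype.ext toColoured_tailSum_gaps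

end HookKronecker

theorem kroneckerTableaux_family1_count_general (a k : ℕ) (ha : 1 ≤ a) :
    Nat.card {x : (ℕ → ℕ) × (ℕ × ℕ → ℕ) //
      (∀ i, x.1 (i + 1) ≤ x.1 i) ∧
      (∀ i, a + 1 ≤ i → x.1 i = 0) ∧
      (∑ i ∈ Finset.range (a + 1), x.1 i) = k ∧
      IsKroneckerTableau (hookRect (3 * k) k a) (hookRect (3 * k) k a) x.1 x.2} =
    colouredB a k :=
  Nat.card_congr ((HookKronecker.tableauEquivAdmissible ha).trans
    HookKronecker.admissibleEquivColoured)

/-- The total number of Kronecker tableaux of shape `(3k, k^a)/α` and type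
`(3k, k^a)/α`, summed over all partitions `α ⊢ k` with at most `a+1` parts, equals
the number of coloured partitions of `k` with parts in `B_a`. -/
theorem kroneckerTableaux_family1_count (a k : ℕ) (ha : 1 ≤ a) (hk : 1 ≤ k) :
    Nat.card {x : (ℕ → ℕ) × (ℕ × ℕ → ℕ) //
      (∀ i, x.1 (i + 1) ≤ x.1 i) ∧
      (∀ i, a + 1 ≤ i → x.1 i = 0) ∧
      (∑ i ∈ Finset.range (a + 1), x.1 i) = k ∧
      IsKroneckerTableau (hookRect (3 * k) k a) (hookRect (3 * k) k a) x.1 x.2} =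
    colouredB a k :=
  kroneckerTableaux_family1_count_general a k ha
end

section
/- Let a ≥ 1 and i ≥ 1, and let k be a nonnegative integer with 2k ≥ (a+1)i. If there exists a Kronecker tableau of shape (3k, k^a)/α and type (3k−ai, (k+i)^a)/α for some partition α of k with at most a+1 parts, then k ≥ a(a+1)i/2. Equivalently, for 2k ≥ (a+1)i and k < a(a+1)i/2 there are no such Kronecker tableaux for any such α. -/
/-! Rows are indexed from `0`. Since `ν_u = ν_{u+1} = k + i` for `1 ≤ u < a`, the lattice condition
at the last `u + 1` of the reading word shows, by downward induction on `u`, that every entry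
`u ≥ 2` lies in a row `< u`. For `w < a`, the lattice condition read just before the first entry
`≥ w + 2` of the top row leaves at most `α_w − α_{w+1}` entries `w + 2` there, and below the top
row the entries `w + 2` occupy distinct columns of `[α_{w+1}, k)`. As there are
`k + i − α_{w+1}` of them, `α_{w+1} + i ≤ α_w`, whence `k = ∑ α_w ≥ i (a + (a - 1) + ⋯ + 0)`. -/

open Set

def entryCells (T : ℕ × ℕ → ℕ) (S : Set (ℕ × ℕ)) (v : ℕ) : Set (ℕ × ℕ) :=
  {p | p ∈ S ∧ T p = v}

lemma entryCount_eq_ncard (T : ℕ × ℕ → ℕ) (S : Set (ℕ × ℕ)) (v : ℕ) :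
    entryCount T S v = (entryCells T S v).ncard :=
  Nat.card_coe_set_eq _

lemma entryCells_mono (T : ℕ × ℕ → ℕ) {S S' : Set (ℕ × ℕ)} (h : S ⊆ S') (v : ℕ) :
    entryCells T S v ⊆ entryCells T S' v :=
  fun _ hp => ⟨h hp.1, hp.2⟩

lemma rrwPrefix_subset_skewCells (lam alpha : ℕ → ℕ) (r c : ℕ) :
    rrwPrefix lam alpha r c ⊆ skewCells lam alpha :=
  fun _ hp => hp.1

lemma exists_last_in_reading_order {V : Set (ℕ × ℕ)} (hV : V.Finite) (hne : V.Nonempty) :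
    ∃ q ∈ V, ∀ p ∈ V, p.1 < q.1 ∨ (p.1 = q.1 ∧ q.2 ≤ p.2) := by
  obtain ⟨r, hr, hr_max⟩ := V.exists_max_image Prod.fst hV hne
  obtain ⟨q, ⟨hqV, hqr⟩, hq_min⟩ := {p ∈ V | p.1 = r.1}.exists_min_image Prod.snd
    (hV.subset (sep_subset _ _)) ⟨r, hr, rfl⟩
  refine ⟨q, hqV, fun p hp => ?_⟩
  rcases (hr_max p hp).lt_or_eq with h | h
  · exact Or.inl (hqr ▸ h)
  · exact Or.inr ⟨hqr ▸ h, hq_min p ⟨hp, h⟩⟩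

namespace IsKroneckerTableau

variable {lam nu alpha : ℕ → ℕ} {T : ℕ × ℕ → ℕ}

lemma alpha_le_lam (hT : IsKroneckerTableau lam nu alpha T) (n : ℕ) : alpha n ≤ lam n :=
  (hT.1 n).1

lemma ncard_entryCells_add (hT : IsKroneckerTableau lam nu alpha T) (v : ℕ) :
    (entryCells T (skewCells lam alpha) (v + 1)).ncard + alpha v = nu v := by
  have htype := hT.2.2.2.2.2.1 v
  rw [entryCount_eq_ncard] at htype
  have := (hT.1 v).2
  omega

lemma lattice (hT : IsKroneckerTableau lam nu alpha T) (r c v : ℕ) :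
    (entryCells T (rrwPrefix lam alpha r c) (v + 2)).ncard + alpha (v + 1) ≤
      (entryCells T (rrwPrefix lam alpha r c) (v + 1)).ncard + alpha v := by
  simpa only [entryCount_eq_ncard] using hT.2.2.2.2.2.2.1 r c v

lemma le_of_row_eq (hT : IsKroneckerTableau lam nu alpha T) {p q : ℕ × ℕ}
    (hp : p ∈ skewCells lam alpha) (hq : q ∈ skewCells lam alpha) (hrow : p.1 = q.1)
    (hcol : p.2 ≤ q.2) : T p ≤ T q := by
  obtain ⟨p1, p2⟩ := p
  obtain ⟨q1, q2⟩ := q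
  obtain rfl : p1 = q1 := hrow
  exact hT.2.2.2.1 p1 p2 q2 hp hq hcol

lemma lt_of_col_eq (hT : IsKroneckerTableau lam nu alpha T) {p q : ℕ × ℕ}
    (hp : p ∈ skewCells lam alpha) (hq : q ∈ skewCells lam alpha) (hcol : p.2 = q.2)
    (hrow : p.1 < q.1) : T p < T q := by
  obtain ⟨p1, p2⟩ := p
  obtain ⟨q1, q2⟩ := q
  obtain rfl : p2 = q2 := hcol
  exact hT.2.2.2.2.1 p1 q1 p2 hp hq hrow

lemma injOn_snd_entryCells (hT : IsKroneckerTableau lam nu alpha T) (u : ℕ) :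
    InjOn Prod.snd (entryCells T (skewCells lam alpha) u) := by
  rintro p ⟨hp, hpu⟩ q ⟨hq, hqu⟩ hcol
  rcases lt_trichotomy p.1 q.1 with h | h | h
  · exact absurd (hT.lt_of_col_eq hp hq hcol h) (by omega)
  · exact Prod.ext h hcol
  · exact absurd (hT.lt_of_col_eq hq hp hcol.symm h) (by omega)

lemma row_lt_of_mem_rrwPrefix (hT : IsKroneckerTableau lam nu alpha T) {p q : ℕ × ℕ}
    (hq : q ∈ skewCells lam alpha) (hp : p ∈ rrwPrefix lam alpha q.1 q.2) (hlt : T p < T q) :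
    p.1 < q.1 := by
  rcases hp.2 with h | ⟨hrow, hcol⟩
  · exact h
  · exact absurd (hT.le_of_row_eq hq hp.1 hrow.symm hcol) (by omega)

/-- At the last `v + 2` of the reading word all `v + 2`'s have been read, so the lattice
condition and `ν_v ≤ ν_{v+1}` force every `v + 1` to have been read as well, hence to lie in an
earlier row. -/
lemma row_lt_of_forall_row_le (hT : IsKroneckerTableau lam nu alpha T)
    (hS : (skewCells lam alpha).Finite) {v R : ℕ} (hnu : nu v ≤ nu (v + 1))
    (hocc : alpha (v + 1) < nu (v + 1))
    (hR : ∀ p ∈ entryCells T (skewCells lam alpha) (v + 2), p.1 ≤ R) :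
    ∀ p ∈ entryCells T (skewCells lam alpha) (v + 1), p.1 < R := by
  have hV : (entryCells T (skewCells lam alpha) (v + 2)).Nonempty := by
    apply nonempty_of_ncard_ne_zero
    have h_succ : (entryCells T (skewCells lam alpha) (v + 2)).ncard + alpha (v + 1) =
        nu (v + 1) := hT.ncard_entryCells_add (v + 1)
    omega
  obtain ⟨q, ⟨hqS, hqT⟩, hq_last⟩ :=
    exists_last_in_reading_order (hS.subset fun _ h => h.1) hV
  have hP_succ : entryCells T (rrwPrefix lam alpha q.1 q.2) (v + 2) =
      entryCells T (skewCells lam alpha) (v + 2) :=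
    (entryCells_mono T (rrwPrefix_subset_skewCells _ _ _ _) _).antisymm
      fun p hp => ⟨⟨hp.1, hq_last p hp⟩, hp.2⟩
  have hP : entryCells T (rrwPrefix lam alpha q.1 q.2) (v + 1) =
      entryCells T (skewCells lam alpha) (v + 1) := by
    refine eq_of_subset_of_ncard_le (entryCells_mono T (rrwPrefix_subset_skewCells _ _ _ _) _)
      ?_ (hS.subset fun _ h => h.1)
    have hlat := hT.lattice q.1 q.2 v
    have h_self := hT.ncard_entryCells_add v
    have h_succ : (entryCells T (skewCells lam alpha) (v + 2)).ncard + alpha (v + 1) =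
        nu (v + 1) := hT.ncard_entryCells_add (v + 1)
    rw [hP_succ] at hlat
    omega
  intro p hp
  rw [← hP] at hp
  have hpT := hp.2
  exact (hT.row_lt_of_mem_rrwPrefix hqS hp.1 (by omega)).trans_le (hR q ⟨hqS, hqT⟩)

/-- The lattice condition read just before the first entry `≥ v + 2` of the top row. -/
lemma ncard_entryCells_inter_row_zero_add_le (hT : IsKroneckerTableau lam nu alpha T)
    (hS : (skewCells lam alpha).Finite) (v : ℕ) :
    (entryCells T (skewCells lam alpha) (v + 2) ∩ {p | p.1 = 0}).ncard + alpha (v + 1) ≤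
      alpha v := by
  suffices h : ∃ c, entryCells T (rrwPrefix lam alpha 0 c) (v + 2) =
      entryCells T (skewCells lam alpha) (v + 2) ∩ {p | p.1 = 0} ∧
        entryCells T (rrwPrefix lam alpha 0 c) (v + 1) = ∅ by
    obtain ⟨c, h_succ, h_self⟩ := h
    simpa only [h_succ, h_self, ncard_empty, zero_add] using hT.lattice 0 c v
  rcases (entryCells T (skewCells lam alpha) (v + 2) ∩ {p | p.1 = 0}).eq_empty_or_nonempty
    with hV | hV
  · have h_empty : ∀ u, entryCells T (rrwPrefix lam alpha 0 (lam 0)) u = ∅ := by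
      refine fun u => eq_empty_iff_forall_notMem.2 ?_
      rintro ⟨p1, p2⟩ ⟨⟨⟨-, hlt⟩, hp | ⟨rfl, hle⟩⟩, -⟩
      · omega
      · exact absurd hlt (not_lt.2 hle)
    exact ⟨lam 0, by rw [hV, h_empty], h_empty _⟩
  · obtain ⟨q, ⟨⟨hqS, hqT⟩, hq0⟩, hq_first⟩ :=
      exists_last_in_reading_order (hS.subset fun _ h => h.1.1) hV
    replace hq0 : q.1 = 0 := hq0
    refine ⟨q.2, ?_, ?_⟩
    · ext p
      constructor
      · rintro ⟨⟨hpS, hp | ⟨hp, -⟩⟩, hpT⟩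
        · omega
        · exact ⟨⟨hpS, hpT⟩, hp⟩
      · intro hp
        rcases hq_first p hp with h | ⟨h, hle⟩
        · omega
        · exact ⟨⟨hp.1.1, Or.inr ⟨hp.2, hle⟩⟩, hp.1.2⟩
    · rw [eq_empty_iff_forall_notMem]
      rintro p ⟨hp, hpT⟩
      have := hT.row_lt_of_mem_rrwPrefix (q := q) hqS (by rwa [hq0]) (by omega)
      omega

end IsKroneckerTableau

lemma mul_succ_mul_le_two_mul_sum_range {f : ℕ → ℕ} {a i : ℕ}
    (hstep : ∀ w < a, f (w + 1) + i ≤ f w) :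
    a * (a + 1) * i ≤ 2 * ∑ v ∈ Finset.range (a + 1), f v := by
  suffices h : ∀ n ≤ a, n * (n + 1) * i + 2 * (n + 1) * f n ≤ 2 * ∑ v ∈ Finset.range (n + 1), f v
    from (h a le_rfl).trans' (Nat.le_add_right _ _)
  intro n hn
  induction n with
  | zero => simp
  | succ n ih =>
    have hsum := ih (by omega)
    have hdrop := hstep n (by omega)
    rw [Finset.sum_range_succ]
    nlinarith

lemma hookRect_of_pos {c k a n : ℕ} (h1 : 1 ≤ n) (h2 : n ≤ a) : hookRect c k a n = k := by
  simp only [hookRect]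
  split_ifs <;> omega

lemma hookRect_succ_le (c k a n : ℕ) : hookRect c k a (n + 1) ≤ k := by
  simp only [hookRect, Nat.add_one_ne_zero, if_false]
  split_ifs <;> omega

lemma row_le_of_mem_skewCells_hookRect {c k a : ℕ} {alpha : ℕ → ℕ} {p : ℕ × ℕ}
    (hp : p ∈ skewCells (hookRect c k a) alpha) : p.1 ≤ a := by
  by_contra h
  have : hookRect c k a p.1 = 0 := by
    simp only [hookRect]
    split_ifs <;> omega
  exact absurd hp.2 (by omega)

lemma skewCells_hookRect_finite (c k a : ℕ) (alpha : ℕ → ℕ) :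
    (skewCells (hookRect c k a) alpha).Finite := by
  refine ((finite_Iic a).prod (finite_Iio (c + k))).subset fun p hp => ⟨?_, ?_⟩
  · exact row_le_of_mem_skewCells_hookRect hp
  · have hlt := hp.2
    simp only [hookRect] at hlt
    simp only [mem_Iio]
    split_ifs at hlt <;> omega

namespace IsKroneckerTableau

variable {c k d m a : ℕ} {alpha : ℕ → ℕ} {T : ℕ × ℕ → ℕ}

lemma row_lt_entry_of_hookRect (hT : IsKroneckerTableau (hookRect c k a) (hookRect d m a) alpha T)
    (hkm : k < m) : ∀ p ∈ skewCells (hookRect c k a) alpha, 2 ≤ T p → p.1 < T p := by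
  suffices h : ∀ n u, a + 1 ≤ u + n → 2 ≤ u →
      ∀ p ∈ entryCells T (skewCells (hookRect c k a) alpha) u, p.1 < u from
    fun p hp h2 => h (a + 1) (T p) (by omega) h2 p ⟨hp, rfl⟩
  intro n
  induction n with
  | zero =>
    intro u hu _ p hp
    have := row_le_of_mem_skewCells_hookRect hp.1
    omega
  | succ n ih =>
    intro u hu h2 p hp
    by_cases hau : a + 1 ≤ u
    · have := row_le_of_mem_skewCells_hookRect hp.1
      omega
    obtain ⟨v, rfl⟩ : ∃ v, u = v + 1 := ⟨u - 1, by omega⟩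
    have hnu : hookRect d m a v ≤ hookRect d m a (v + 1) := by
      rw [hookRect_of_pos (by omega) (by omega), hookRect_of_pos (by omega) (by omega)]
    have hocc : alpha (v + 1) < hookRect d m a (v + 1) := by
      have := hT.alpha_le_lam (v + 1)
      rw [hookRect_of_pos (by omega) (by omega)] at this ⊢
      omega
    refine hT.row_lt_of_forall_row_le (skewCells_hookRect_finite c k a alpha) hnu hocc
      (fun q hq => ?_) p hp
    have := ih (v + 2) (by omega) (by omega) q hq
    omega

/-- Below the top row, the entries `w + 2` sit in rows `1, …, w + 1`, hence in distinct columns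
of `[α_{w+1}, k)`. -/
lemma ncard_entryCells_diff_row_zero_add_le
    (hT : IsKroneckerTableau (hookRect c k a) (hookRect d m a) alpha T) (hkm : k < m)
    (hα : Antitone alpha) (w : ℕ) :
    (entryCells T (skewCells (hookRect c k a) alpha) (w + 2) \ {p | p.1 = 0}).ncard +
      alpha (w + 1) ≤ k := by
  have hcols : (entryCells T (skewCells (hookRect c k a) alpha) (w + 2) \ {p | p.1 = 0}).ncard ≤
      (Ico (alpha (w + 1)) k).ncard := by
    refine ncard_le_ncard_of_injOn Prod.snd ?_ ((hT.injOn_snd_entryCells _).mono sdiff_subset)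
      (finite_Ico _ _)
    rintro p ⟨⟨hpS, hpT⟩, hp0⟩
    replace hp0 : p.1 ≠ 0 := hp0
    have hrow := hT.row_lt_entry_of_hookRect hkm p hpS (by omega)
    have hlam := hookRect_of_pos (c := c) (k := k) (by omega) (row_le_of_mem_skewCells_hookRect hpS)
    have hcol := hα (show p.1 ≤ w + 1 by omega)
    exact ⟨hcol.trans hpS.1, hlam ▸ hpS.2⟩
  have hαk := (hT.alpha_le_lam (w + 1)).trans (hookRect_succ_le c k a w)
  rw [ncard_Ico_nat] at hcols
  omega

lemma alpha_succ_add_le (hT : IsKroneckerTableau (hookRect c k a) (hookRect d m a) alpha T)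
    (hkm : k < m) (hα : Antitone alpha) {w : ℕ} (hw : w < a) :
    alpha (w + 1) + m ≤ alpha w + k := by
  have hS := skewCells_hookRect_finite c k a alpha
  have h_total : (entryCells T (skewCells (hookRect c k a) alpha) (w + 2)).ncard +
      alpha (w + 1) = m :=
    (hT.ncard_entryCells_add (w + 1)).trans (hookRect_of_pos (by omega) (by omega))
  have h_split := ncard_inter_add_ncard_sdiff_eq_ncard
    (entryCells T (skewCells (hookRect c k a) alpha) (w + 2)) {p | p.1 = 0}
    (hS.subset fun _ h => h.1)
  have h_top := hT.ncard_entryCells_inter_row_zero_add_le hS w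
  have h_rest := hT.ncard_entryCells_diff_row_zero_add_le hkm hα w
  omega

end IsKroneckerTableau

theorem kroneckerTableaux_family2_vanishing_general (a i k : ℕ) (hi : 1 ≤ i)
    (alpha : ℕ → ℕ) (T : ℕ × ℕ → ℕ)
    (hdec : ∀ n, alpha (n + 1) ≤ alpha n)
    (hsum : (∑ n ∈ Finset.range (a + 1), alpha n) = k)
    (hT : IsKroneckerTableau (hookRect (3 * k) k a)
      (fun t => if t = 0 then 3 * k - a * i else if t < a + 1 then k + i else 0)
      alpha T) :
    a * (a + 1) * i ≤ 2 * k := by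
  have hT' : IsKroneckerTableau (hookRect (3 * k) k a) (hookRect (3 * k - a * i) (k + i) a)
    alpha T := hT
  have hstep : ∀ w < a, alpha (w + 1) + i ≤ alpha w := fun w hw => by
    have := hT'.alpha_succ_add_le (by omega) (antitone_nat_of_succ_le hdec) hw
    omega
  simpa only [hsum] using mul_succ_mul_le_two_mul_sum_range hstep

/-- For `i ≥ 1` and `2k ≥ (a+1)i`, if a Kronecker tableau of shape `(3k, k^a)/α` and
type `(3k−ai, (k+i)^a)/α` exists for some partition `α ⊢ k` with at most `a+1`
parts, then `k ≥ a(a+1)i/2` (equivalently `2k ≥ a(a+1)i`). -/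
theorem kroneckerTableaux_family2_vanishing (a i k : ℕ) (ha : 1 ≤ a) (hi : 1 ≤ i)
    (hk : (a + 1) * i ≤ 2 * k)
    (alpha : ℕ → ℕ) (T : ℕ × ℕ → ℕ)
    (hdec : ∀ n, alpha (n + 1) ≤ alpha n)
    (hlen : ∀ n, a + 1 ≤ n → alpha n = 0)
    (hsum : (∑ n ∈ Finset.range (a + 1), alpha n) = k)
    (hT : IsKroneckerTableau (hookRect (3 * k) k a)
      (fun t => if t = 0 then 3 * k - a * i else if t < a + 1 then k + i else 0)
      alpha T) :
    a * (a + 1) * i ≤ 2 * k :=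
  kroneckerTableaux_family2_vanishing_general a i k hi alpha T hdec hsum hT
end
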